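/- Let r > 0 and a0 ∈ ℝ. Then (1/(2πi)) ∮_{|w|=1} h(1/w) h'(w) dw = r^2(1 - 4a0^2) - 2r^4, where the integral is taken over the positively oriented unit circle. Under the change of variables t0 = r^2(1 - 4a0^2) - 2r^4 this says ∮_{|w|=1} h(1/w) h'(w) dw = 2πi t0, which is the identity giving area(Ω) = π t0 in Theorem 2.2. -/
import Mathlib


noncomputable section

/-- The rational function `h(w) = r w + a0 + 2 a0 r / w + r² / w²`, as a function of a
complex variable (with real parameters `r`, `a0`). -/
def h (r a0 : ℝ) (w : ℂ) : ℂ :=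
  (r:ℂ)*w + (a0:ℂ) + 2*(a0:ℂ)*(r:ℂ)/w + (r:ℂ)^2/w^2

/-- The derivative `h'(w) = r - 2 a0 r / w² - 2 r² / w³`. -/
def h' (r a0 : ℝ) (w : ℂ) : ℂ :=
  (r:ℂ) - 2*(a0:ℂ)*(r:ℂ)/w^2 - 2*(r:ℂ)^2/w^3

open Complex

lemma circleIntegral_add {f g : ℂ → ℂ} {c : ℂ} {R : ℝ} (hf : CircleIntegrable f c R)
    (hg : CircleIntegrable g c R) :
    (∮ z in C(c, R), f z + g z) = (∮ z in C(c, R), f z) + ∮ z in C(c, R), g z := by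
  simp only [circleIntegral, smul_add, intervalIntegral.integral_add hf.out hg.out]

lemma zpow_circleIntegrable (n : ℤ) : CircleIntegrable (fun w : ℂ => w ^ n) 0 1 := by
  have h0 : (0:ℂ) ∉ Metric.sphere (0:ℂ) |1| := by simp
  simpa using
    (circleIntegrable_sub_zpow_iff (c := (0:ℂ)) (w := 0) (R := 1) (n := n)).2
      (Or.inr (Or.inr h0))

lemma const_mul_zpow_circleIntegrable (a : ℂ) (n : ℤ) :
    CircleIntegrable (fun w : ℂ => a * w ^ n) 0 1 :=
  (zpow_circleIntegrable n).const_mul a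

lemma zpow_circleIntegral (n : ℤ) :
    (∮ w in C((0:ℂ), 1), w ^ n) =
      if n = -1 then 2 * Real.pi * Complex.I else 0 := by
  split_ifs with hn
  · subst hn
    have := circleIntegral.integral_sub_inv_of_mem_ball
      (c := (0:ℂ)) (w := 0) (R := 1) (by simp)
    simpa [zpow_neg, zpow_one] using this
  · simpa using circleIntegral.integral_sub_zpow_of_ne hn 0 0 1

lemma const_mul_zpow_circleIntegral (a : ℂ) (n : ℤ) :
    (∮ w in C((0:ℂ), 1), a * w ^ n) =
      a * (if n = -1 then 2 * Real.pi * Complex.I else 0) := by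
  rw [circleIntegral.integral_const_mul, zpow_circleIntegral]

/-- The contour-integral identity
`(1/(2πi)) ∮_{|w|=1} h(1/w) h'(w) dw = r²(1 - 4a0²) - 2r⁴`,
which gives `area(Ω) = π t0` under the change of variables
`t0 = r²(1 - 4a0²) - 2r⁴`. -/
theorem circle_integral_h_eq_t0 (r a0 : ℝ) (hr : 0 < r) :
    (2 * (Real.pi : ℂ) * Complex.I)⁻¹ *
        (∮ w in C((0:ℂ), 1), h r a0 (1/w) * h' r a0 w) =
      ((r^2*(1 - 4*a0^2) - 2*r^4 : ℝ) : ℂ) := by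
  set R := (r : ℂ)
  set A := (a0 : ℂ)
  -- the integrand equals a Laurent polynomial on the unit circle
  have hEq : Set.EqOn (fun w => h r a0 (1/w) * h' r a0 w)
      (fun w : ℂ =>
        (-2*R^3) * w ^ (-4:ℤ) +
        ((-2*A*R^2 - 2*A*R^2) * w ^ (-3:ℤ) +
        ((-2*A^2*R - 4*A*R^3) * w ^ (-2:ℤ) +
        ((R^2 - 4*A^2*R^2 - 2*R^4) * w ^ (-1:ℤ) +
        ((A*R - 2*A*R^3) * w ^ (0:ℤ) +
        ((2*A*R^2) * w ^ (1:ℤ) +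
        (R^3) * w ^ (2:ℤ))))))) (Metric.sphere (0:ℂ) 1) := by
    intro w hw
    have hw0 : w ≠ 0 := by
      intro h0
      simp [h0] at hw
    simp only [zpow_neg, zpow_ofNat, zpow_one, zpow_zero, mul_one]
    have e1 : h r a0 (1/w) = (r:ℂ)*w⁻¹ + (a0:ℂ) + 2*(a0:ℂ)*(r:ℂ)*w + (r:ℂ)^2*w^2 := by
      simp only [h, one_div, inv_pow, div_inv_eq_mul]
    rw [e1, h']
    field_simp [hw0]
    ring
  rw [circleIntegral.integral_congr (by norm_num) hEq]
  have I2 : CircleIntegrable (fun w : ℂ => (R^3) * w ^ (2:ℤ)) 0 1 :=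
    const_mul_zpow_circleIntegrable _ _
  have I1 : CircleIntegrable (fun w : ℂ => (2*A*R^2) * w ^ (1:ℤ) + (R^3) * w ^ (2:ℤ)) 0 1 :=
    (const_mul_zpow_circleIntegrable _ _).add I2
  have I0 : CircleIntegrable (fun w : ℂ => (A*R - 2*A*R^3) * w ^ (0:ℤ) +
      ((2*A*R^2) * w ^ (1:ℤ) + (R^3) * w ^ (2:ℤ))) 0 1 :=
    (const_mul_zpow_circleIntegrable _ _).add I1
  have Im1 : CircleIntegrable (fun w : ℂ => (R^2 - 4*A^2*R^2 - 2*R^4) * w ^ (-1:ℤ) +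
      ((A*R - 2*A*R^3) * w ^ (0:ℤ) +
      ((2*A*R^2) * w ^ (1:ℤ) + (R^3) * w ^ (2:ℤ)))) 0 1 :=
    (const_mul_zpow_circleIntegrable _ _).add I0
  have Im2 : CircleIntegrable (fun w : ℂ => (-2*A^2*R - 4*A*R^3) * w ^ (-2:ℤ) +
      ((R^2 - 4*A^2*R^2 - 2*R^4) * w ^ (-1:ℤ) +
      ((A*R - 2*A*R^3) * w ^ (0:ℤ) +
      ((2*A*R^2) * w ^ (1:ℤ) + (R^3) * w ^ (2:ℤ))))) 0 1 :=
    (const_mul_zpow_circleIntegrable _ _).add Im1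
  have Im3 : CircleIntegrable (fun w : ℂ => (-2*A*R^2 - 2*A*R^2) * w ^ (-3:ℤ) +
      ((-2*A^2*R - 4*A*R^3) * w ^ (-2:ℤ) +
      ((R^2 - 4*A^2*R^2 - 2*R^4) * w ^ (-1:ℤ) +
      ((A*R - 2*A*R^3) * w ^ (0:ℤ) +
      ((2*A*R^2) * w ^ (1:ℤ) + (R^3) * w ^ (2:ℤ)))))) 0 1 :=
    (const_mul_zpow_circleIntegrable _ _).add Im2
  rw [circleIntegral_add (const_mul_zpow_circleIntegrable _ _) Im3,
      circleIntegral_add (const_mul_zpow_circleIntegrable _ _) Im2,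
      circleIntegral_add (const_mul_zpow_circleIntegrable _ _) Im1,
      circleIntegral_add (const_mul_zpow_circleIntegrable _ _) I0,
      circleIntegral_add (const_mul_zpow_circleIntegrable _ _) I1,
      circleIntegral_add (const_mul_zpow_circleIntegrable _ _) I2,
      const_mul_zpow_circleIntegral, const_mul_zpow_circleIntegral,
      const_mul_zpow_circleIntegral, const_mul_zpow_circleIntegral,
      const_mul_zpow_circleIntegral, const_mul_zpow_circleIntegral,
      const_mul_zpow_circleIntegral]
  norm_num
  have hp : ((Real.pi : ℂ))⁻¹ * (Real.pi : ℂ) = 1 :=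
    inv_mul_cancel₀ (by exact_mod_cast Real.pi_ne_zero)
  linear_combination
    (-(Real.pi:ℂ)⁻¹ * (Real.pi:ℂ) *
        ((r:ℂ)^2 - 4*(a0:ℂ)^2*(r:ℂ)^2 - 2*(r:ℂ)^4)) * Complex.I_mul_I +
      ((r:ℂ)^2 - 4*(a0:ℂ)^2*(r:ℂ)^2 - 2*(r:ℂ)^4) * hp
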